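/- Let κ > 0 and c = c_κ, define H and g as above with these parameters, and let ρ̂ be the unique solution of ρ = exp(H(ρ)) with ρ̂ > c_κ/√(1 + κ). Then ρ̂ < c_κ/√κ, and g is strictly increasing on (1, ρ̂) and strictly decreasing on (ρ̂, c_κ/√κ). -/

import Mathlib

/-- `H(ρ) = (c²/2)·(1 − 1/ρ²) − κ·ln ρ`. -/
noncomputable def Hfun (κ c ρ : ℝ) : ℝ := c ^ 2 / 2 * (1 - 1 / ρ ^ 2) - κ * Real.log ρ

/-- `g(ρ) = c²/ρ + κ·ρ + exp(H(ρ))`. -/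
noncomputable def gfun (κ c ρ : ℝ) : ℝ := c ^ 2 / ρ + κ * ρ + Real.exp (Hfun κ c ρ)

section aux

lemma logu (u : ℝ) (hu : 0 < u) : (1+u) * Real.log (1+u) < u + u^2/2 := by
  have key : StrictMonoOn (fun u : ℝ => u + u^2/2 - (1+u) * Real.log (1+u)) (Set.Ici 0) := by
    apply strictMonoOn_of_deriv_pos (convex_Ici 0)
    · apply ContinuousOn.sub
      · fun_prop
      · apply ContinuousOn.mul (by fun_prop)
        apply ContinuousOn.log (by fun_prop)
        intro x hx; simp at hx; positivity
    · intro x hx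
      rw [interior_Ici] at hx
      simp only [Set.mem_Ioi] at hx
      have h1 : (0:ℝ) < 1 + x := by linarith
      have hd : HasDerivAt (fun u : ℝ => u + u^2/2 - (1+u) * Real.log (1+u))
          (1 + x - Real.log (1+x) - 1) x := by
        have l1 : HasDerivAt (fun u : ℝ => Real.log (1+u)) (1/(1+x)) x := by
          have := (Real.hasDerivAt_log h1.ne').comp x
            ((hasDerivAt_id x).const_add 1)
          simpa [Function.comp_def] using this
        have l2 : HasDerivAt (fun u : ℝ => (1+u) * Real.log (1+u))
            (1 * Real.log (1+x) + (1+x) * (1/(1+x))) x :=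
          ((hasDerivAt_id x).const_add 1).mul l1
        have l3 : HasDerivAt (fun u : ℝ => u + u^2/2) (1 + (2*x)/2) x := by
          have := (hasDerivAt_pow 2 x).div_const 2
          simpa using (hasDerivAt_id' x).fun_add this
        have := l3.fun_sub l2
        refine this.congr_deriv ?_
        field_simp
        ring
      rw [hd.deriv]
      have : Real.log (1+x) < x := by
        have := Real.log_lt_sub_one_of_pos h1 (by linarith)
        linarith
      linarith
  have h0 : (0:ℝ) ∈ Set.Ici (0:ℝ) := by simp
  have hu' : u ∈ Set.Ici (0:ℝ) := le_of_lt hu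
  have := key h0 hu' hu
  simp at this
  linarith

lemma hasDerivAt_Hfun (κ c ρ : ℝ) (hρ : 0 < ρ) :
    HasDerivAt (Hfun κ c) (c^2/ρ^3 - κ/ρ) ρ := by
  have l1 : HasDerivAt (fun x : ℝ => 1 / x ^ 2) (-(2*ρ)/(ρ^2)^2) ρ := by
    have := (hasDerivAt_pow 2 ρ).fun_inv (by positivity)
    simpa [one_div] using this
  have l2 : HasDerivAt (fun x : ℝ => c^2/2 * (1 - 1/x^2)) (c^2/2 * (0 - -(2*ρ)/(ρ^2)^2)) ρ :=
    ((hasDerivAt_const ρ (1:ℝ)).sub l1).const_mul _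
  have l3 : HasDerivAt (fun x : ℝ => κ * Real.log x) (κ * (1/ρ)) ρ := by
    simpa using (Real.hasDerivAt_log hρ.ne').const_mul κ
  have := l2.fun_sub l3
  have e : Hfun κ c = fun x : ℝ => c^2/2 * (1 - 1/x^2) - κ * Real.log x := rfl
  rw [e]
  refine this.congr_deriv ?_
  field_simp
  ring

lemma hasDerivAt_gfun (κ c ρ : ℝ) (hρ : 0 < ρ) :
    HasDerivAt (gfun κ c) ((κ - c^2/ρ^2) * (1 - Real.exp (Hfun κ c ρ)/ρ)) ρ := by
  have l1 : HasDerivAt (fun x : ℝ => c^2/x) ((0 * ρ - c^2 * 1)/ρ^2) ρ :=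
    (hasDerivAt_const ρ (c^2)).div (hasDerivAt_id ρ) hρ.ne'
  have l2 : HasDerivAt (fun x : ℝ => κ * x) κ ρ := by
    simpa using (hasDerivAt_id ρ).const_mul κ
  have l3 : HasDerivAt (fun x : ℝ => Real.exp (Hfun κ c x))
      (Real.exp (Hfun κ c ρ) * (c^2/ρ^3 - κ/ρ)) ρ := (hasDerivAt_Hfun κ c ρ hρ).exp
  have := (l1.fun_add l2).fun_add l3
  have e : gfun κ c = fun x : ℝ => c^2/x + κ * x + Real.exp (Hfun κ c x) := rfl
  rw [e]
  refine this.congr_deriv ?_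
  field_simp
  ring

lemma hasDerivAt_phi (κ c ρ : ℝ) (hρ : 0 < ρ) :
    HasDerivAt (fun x : ℝ => Real.log x - Hfun κ c x) (((1+κ)*ρ^2 - c^2)/ρ^3) ρ := by
  have := (Real.hasDerivAt_log hρ.ne').fun_sub (hasDerivAt_Hfun κ c ρ hρ)
  refine this.congr_deriv ?_
  field_simp
  ring

lemma Gf_anti (κ : ℝ) (hκ : 0 < κ) :
    StrictAntiOn (fun z : ℝ => κ * Real.log z + Real.log ((z - Real.sqrt κ)^2 + 1) - z^2/2)
      (Set.Ici (Real.sqrt (1+κ))) := by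
  set s := Real.sqrt κ with hs
  have hs0 : 0 < s := Real.sqrt_pos.mpr hκ
  have hs2 : s^2 = κ := Real.sq_sqrt hκ.le
  apply strictAntiOn_of_deriv_neg (convex_Ici _)
  · apply ContinuousOn.sub
    apply ContinuousOn.add
    · apply ContinuousOn.mul continuousOn_const
      apply ContinuousOn.log (by fun_prop)
      intro x hx
      simp only [Set.mem_Ici] at hx
      have : 0 < x := lt_of_lt_of_le (Real.sqrt_pos.mpr (by linarith)) hx
      exact this.ne'
    · apply ContinuousOn.log (by fun_prop)
      intro x _; positivity
    · fun_prop
  · intro z hz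
    rw [interior_Ici] at hz
    simp only [Set.mem_Ioi] at hz
    have hz0 : 0 < z := lt_of_le_of_lt (Real.sqrt_nonneg _) hz
    have hz2 : 1 + κ < z^2 := by
      have := (Real.sqrt_lt' hz0).mp hz
      linarith
    have hzs : s < z := by
      have : s ≤ Real.sqrt (1+κ) := Real.sqrt_le_sqrt (by linarith)
      linarith
    have hq : (0:ℝ) < (z-s)^2 + 1 := by positivity
    have hd : HasDerivAt (fun z : ℝ => κ * Real.log z + Real.log ((z - s)^2 + 1) - z^2/2)
        (κ * (1/z) + (2*(z-s))/((z-s)^2+1) - (2*z)/2) z := by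
      have l1 : HasDerivAt (fun x : ℝ => κ * Real.log x) (κ * (1/z)) z := by
        simpa using (Real.hasDerivAt_log hz0.ne').const_mul κ
      have l2 : HasDerivAt (fun x : ℝ => (x - s)^2 + 1) (2*(z-s)) z := by
        have := (((hasDerivAt_id z).sub_const s).pow 2).add_const 1
        simpa [mul_comm] using this
      have l3 : HasDerivAt (fun x : ℝ => Real.log ((x - s)^2 + 1)) ((2*(z-s))/((z-s)^2+1)) z := by
        have := (Real.hasDerivAt_log hq.ne').comp z l2
        simpa [div_eq_mul_inv, mul_comm, Function.comp_def] using this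
      have l4 : HasDerivAt (fun x : ℝ => x^2/2) ((2*z)/2) z := by
        have := (hasDerivAt_pow 2 z).div_const 2
        simpa using this
      exact (l1.add l3).sub l4
    rw [hd.deriv]
    rw [sub_neg]
    rw [mul_one_div, div_add_div _ _ hz0.ne' hq.ne', div_lt_div_iff₀ (by positivity) (by norm_num)]
    nlinarith [mul_pos (mul_pos hz0 (pow_pos (sub_pos.mpr hzs) 2)) hq, mul_pos (pow_pos (sub_pos.mpr hzs) 2) (sub_pos.mpr hz2)]

end aux

set_option maxHeartbeats 2000000 in
/-- For `κ > 0` and `c = c_κ` (the root `> √(1+κ)` of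
`z^κ·((z − √κ)² + 1) = exp((z² − κ)/2)·κ^{κ/2}`), if `ρ̂ > c/√(1+κ)` solves
`ρ̂ = exp(H(ρ̂))`, then `ρ̂ < c/√κ`, and `g` is strictly increasing on `(1, ρ̂)` and
strictly decreasing on `(ρ̂, c/√κ)`. -/
theorem stmt7 (κ c ρhat : ℝ) (hκ : 0 < κ)
    (hc : Real.sqrt (1 + κ) < c ∧
      c ^ κ * ((c - Real.sqrt κ) ^ 2 + 1) = Real.exp ((c ^ 2 - κ) / 2) * κ ^ (κ / 2))
    (hρ1 : c / Real.sqrt (1 + κ) < ρhat) (hρ2 : ρhat = Real.exp (Hfun κ c ρhat)) :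
    ρhat < c / Real.sqrt κ ∧
      StrictMonoOn (gfun κ c) (Set.Ioo 1 ρhat) ∧
      StrictAntiOn (gfun κ c) (Set.Ioo ρhat (c / Real.sqrt κ)) := by
  obtain ⟨hc1, hc2⟩ := hc
  set s := Real.sqrt κ with hs
  have hs0 : 0 < s := Real.sqrt_pos.mpr hκ
  have hs2 : s^2 = κ := Real.sq_sqrt hκ.le
  have hk1 : (0:ℝ) < 1 + κ := by linarith
  have hsk0 : 0 < Real.sqrt (1+κ) := Real.sqrt_pos.mpr hk1
  have hsk2 : (Real.sqrt (1+κ))^2 = 1+κ := Real.sq_sqrt hk1.le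
  have hssk : s < Real.sqrt (1+κ) := by
    apply Real.sqrt_lt_sqrt hκ.le; linarith
  have hc0 : 0 < c := lt_trans hsk0 hc1
  have hcs : s < c := lt_trans hssk hc1
  have hq0 : (0:ℝ) < (c - s)^2 + 1 := by positivity
  have hlogs : Real.log s = Real.log κ / 2 := Real.log_sqrt hκ.le
  -- log form of the defining equation
  have heq : κ * Real.log c + Real.log ((c-s)^2+1) = (c^2-κ)/2 + κ/2 * Real.log κ := by
    have h1 := congrArg Real.log hc2
    rw [Real.log_mul (by positivity) hq0.ne', Real.log_mul (Real.exp_ne_zero _) (by positivity),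
      Real.log_rpow hc0, Real.log_exp, Real.log_rpow hκ] at h1
    linarith
  -- c < s + 1/s
  have hcbound : c < s + 1/s := by
    by_contra h
    push_neg at h
    set z₀ : ℝ := s + 1/s with hz₀
    have hz₀0 : 0 < z₀ := by positivity
    have hz₀sq : 1 + κ ≤ z₀^2 := by
      have e : z₀^2 = κ + 2 + 1/κ := by
        rw [hz₀]; field_simp; rw [← hs2]; ring
      rw [e]
      have : 0 < 1/κ := by positivity
      linarith
    have hz₀mem : z₀ ∈ Set.Ici (Real.sqrt (1+κ)) := by
      simp only [Set.mem_Ici]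
      calc Real.sqrt (1+κ) ≤ Real.sqrt (z₀^2) := Real.sqrt_le_sqrt hz₀sq
        _ = z₀ := Real.sqrt_sq hz₀0.le
    have hcmem : c ∈ Set.Ici (Real.sqrt (1+κ)) := hc1.le
    have hGfc : κ * Real.log c + Real.log ((c-s)^2+1) - c^2/2 = κ/2 * Real.log κ - κ/2 := by
      linarith
    have hz₀val : κ * Real.log z₀ + Real.log ((z₀-s)^2+1) - z₀^2/2
        = (κ+1) * (Real.log (κ+1) - Real.log κ) + (κ/2) * Real.log κ - (κ + 2 + 1/κ)/2 := by
      have e1 : z₀ - s = 1/s := by ring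
      have e2 : (z₀-s)^2+1 = (1+κ)/κ := by
        rw [e1]; field_simp; linarith [hs2]
      have e3 : z₀ = (κ+1)/s := by
        rw [hz₀]; field_simp; linarith [hs2]
      have e4 : Real.log z₀ = Real.log (κ+1) - Real.log κ / 2 := by
        rw [e3, Real.log_div (by linarith) hs0.ne', hlogs]
      have e5 : z₀^2 = κ + 2 + 1/κ := by
        rw [hz₀]; field_simp; rw [← hs2]; ring
      rw [e2, e4, e5, Real.log_div (by linarith) hκ.ne']
      ring_nf
    have hlt : κ * Real.log z₀ + Real.log ((z₀-s)^2+1) - z₀^2/2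
        < κ * Real.log c + Real.log ((c-s)^2+1) - c^2/2 := by
      rw [hGfc, hz₀val]
      have hu := logu (1/κ) (by positivity)
      have hl1 : Real.log (1 + 1/κ) = Real.log (κ+1) - Real.log κ := by
        rw [show (1:ℝ) + 1/κ = (κ+1)/κ by field_simp, Real.log_div (by linarith) hκ.ne']
      rw [hl1] at hu
      have : (κ+1) * (Real.log (κ+1) - Real.log κ) < 1 + 1/(2*κ) := by
        have := mul_lt_mul_of_pos_left hu hκ
        have e : κ * ((1 + 1/κ) * (Real.log (κ+1) - Real.log κ)) =
            (κ+1) * (Real.log (κ+1) - Real.log κ) := by field_simp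
        rw [e] at this
        have e2 : κ * (1/κ + (1/κ)^2/2) = 1 + 1/(2*κ) := by field_simp
        linarith [e2 ▸ this]
      have : (κ + 2 + 1/κ)/2 = κ/2 + 1 + 1/(2*κ) := by field_simp
      linarith
    rcases eq_or_lt_of_le h with h' | h'
    · rw [h'] at hlt; exact lt_irrefl _ hlt
    · have := Gf_anti κ hκ hz₀mem hcmem h'
      simp only at this
      rw [← hs] at this
      linarith
  -- phi at c/√κ is positive : Hfun κ c (c/s) < log (c/s)
  have hHcs : Hfun κ c (c/s) < Real.log (c/s) := by
    have e0 : (1:ℝ)/(c/s)^2 = κ/c^2 := by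
      rw [div_pow]; rw [one_div, inv_div]; rw [hs2]
    have e1 : Hfun κ c (c/s) = (c^2-κ)/2 - κ * Real.log (c/s) := by
      unfold Hfun
      rw [e0]
      field_simp
    rw [e1, Real.log_div hc0.ne' hs0.ne', hlogs]
    have key : (c-s)^2 + 1 < c/s := by
      rw [lt_div_iff₀ hs0]
      have hst : s * (c - s) < 1 := by
        have : c - s < 1/s := by linarith
        calc s * (c-s) < s * (1/s) := by apply mul_lt_mul_of_pos_left this hs0
          _ = 1 := by field_simp
      nlinarith [sub_pos.mpr hcs]
    have hlog : Real.log ((c-s)^2+1) < Real.log (c/s) := Real.log_lt_log hq0 key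
    rw [Real.log_div hc0.ne' hs0.ne', hlogs] at hlog
    linarith
  -- phi machinery
  set a : ℝ := c / Real.sqrt (1+κ) with ha
  have ha0 : 0 < a := by positivity
  have ha1 : 1 < a := by
    rw [ha, lt_div_iff₀ hsk0]; simpa using hc1
  set phi : ℝ → ℝ := fun x => Real.log x - Hfun κ c x with hphi
  have hρhat0 : 0 < ρhat := lt_trans ha0 hρ1
  have hphihat : phi ρhat = 0 := by
    have : Real.log ρhat = Hfun κ c ρhat := by
      conv_lhs => rw [hρ2]
      exact Real.log_exp _
    simp [hphi, this]
  have hphi1 : phi 1 = 0 := by simp [hphi, Hfun]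
  have phiMono : StrictMonoOn phi (Set.Ici a) := by
    apply strictMonoOn_of_deriv_pos (convex_Ici a)
    · intro x hx
      simp only [Set.mem_Ici] at hx
      have hx0 : 0 < x := lt_of_lt_of_le ha0 hx
      exact (hasDerivAt_phi κ c x hx0).continuousAt.continuousWithinAt
    · intro x hx
      rw [interior_Ici] at hx
      simp only [Set.mem_Ioi] at hx
      have hx0 : 0 < x := lt_trans ha0 hx
      rw [(hasDerivAt_phi κ c x hx0).deriv]
      have : c < x * Real.sqrt (1+κ) := by
        rw [ha, div_lt_iff₀ hsk0] at hx; exact hx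
      have h3 := mul_self_lt_mul_self hc0.le this
      have h2 : c^2 < (1+κ)*x^2 := by nlinarith [hsk2, h3]
      exact div_pos (by linarith) (by positivity)
  have phiAnti : StrictAntiOn phi (Set.Icc 1 a) := by
    apply strictAntiOn_of_deriv_neg (convex_Icc 1 a)
    · intro x hx
      have hx0 : (0:ℝ) < x := lt_of_lt_of_le one_pos hx.1
      exact (hasDerivAt_phi κ c x hx0).continuousAt.continuousWithinAt
    · intro x hx
      rw [interior_Icc] at hx
      have hx0 : (0:ℝ) < x := lt_trans one_pos hx.1
      rw [(hasDerivAt_phi κ c x hx0).deriv]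
      have : x * Real.sqrt (1+κ) < c := by
        have := hx.2
        rw [ha, lt_div_iff₀ hsk0] at this; exact this
      have h3 := mul_self_lt_mul_self (by positivity : (0:ℝ) ≤ x * Real.sqrt (1+κ)) this
      have h2 : (1+κ)*x^2 < c^2 := by nlinarith [hsk2, h3]
      apply div_neg_of_neg_of_pos (by linarith) (by positivity)
  have hacs : a < c/s := by
    rw [ha, div_lt_div_iff₀ hsk0 hs0]
    nlinarith [hssk]
  have haρ : a < ρhat := hρ1
  -- ρhat < c/√κ
  have hmain1 : ρhat < c/s := by
    by_contra h
    push_neg at h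
    have hphics : 0 < phi (c/s) := by simp [hphi]; linarith [hHcs]
    rcases eq_or_lt_of_le h with h' | h'
    · rw [h'] at hphics; linarith [hphihat]
    · have h2 := hphics.trans (phiMono (Set.mem_Ici.mpr hacs.le)
        (Set.mem_Ici.mpr (le_trans hacs.le h)) h')
      rw [hphihat] at h2
      exact lt_irrefl 0 h2
  -- sign of phi on (1, ρhat)
  have hsign1 : ∀ x ∈ Set.Ioo (1:ℝ) ρhat, x < Real.exp (Hfun κ c x) := by
    intro x hx
    have hx0 : (0:ℝ) < x := lt_trans one_pos hx.1
    have hphix : phi x < 0 := by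
      rcases le_or_gt x a with hxa | hxa
      · have := phiAnti (Set.mem_Icc.mpr ⟨le_refl 1, ha1.le⟩)
          (Set.mem_Icc.mpr ⟨hx.1.le, hxa⟩) hx.1
        linarith [hphi1]
      · have := phiMono (Set.mem_Ici.mpr hxa.le) (Set.mem_Ici.mpr haρ.le) hx.2
        linarith [hphihat]
    have : Real.log x < Hfun κ c x := by simpa [hphi, sub_neg] using hphix
    calc x = Real.exp (Real.log x) := (Real.exp_log hx0).symm
      _ < Real.exp (Hfun κ c x) := Real.exp_lt_exp.mpr this
  have hsign2 : ∀ x ∈ Set.Ioo ρhat (c/s), Real.exp (Hfun κ c x) < x := by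
    intro x hx
    have hx0 : (0:ℝ) < x := lt_trans hρhat0 hx.1
    have hphix : 0 < phi x := by
      have := phiMono (Set.mem_Ici.mpr haρ.le) (Set.mem_Ici.mpr (le_trans haρ.le hx.1.le)) hx.1
      linarith [hphihat]
    have : Hfun κ c x < Real.log x := by simpa [hphi, sub_pos] using hphix
    calc Real.exp (Hfun κ c x) < Real.exp (Real.log x) := Real.exp_lt_exp.mpr this
      _ = x := Real.exp_log hx0
  -- factor sign: first factor negative for x < c/s
  have hfac1 : ∀ x : ℝ, 0 < x → x < c/s → κ - c^2/x^2 < 0 := by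
    intro x hx0 hxcs
    have : x * s < c := by rw [← lt_div_iff₀ hs0]; exact hxcs
    have h3 := mul_self_lt_mul_self (mul_nonneg hx0.le hs0.le) this
    have h2 : κ * x^2 < c^2 := by nlinarith [hs2, h3]
    have : κ < c^2/x^2 := by rw [lt_div_iff₀ (by positivity)]; linarith
    linarith
  refine ⟨hmain1, ?_, ?_⟩
  · apply strictMonoOn_of_deriv_pos (convex_Ioo 1 ρhat)
    · intro x hx
      have hx0 : (0:ℝ) < x := lt_trans one_pos hx.1
      exact (hasDerivAt_gfun κ c x hx0).continuousAt.continuousWithinAt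
    · intro x hx
      rw [interior_Ioo] at hx
      have hx0 : (0:ℝ) < x := lt_trans one_pos hx.1
      rw [(hasDerivAt_gfun κ c x hx0).deriv]
      have h1 : κ - c^2/x^2 < 0 := hfac1 x hx0 (lt_trans hx.2 hmain1)
      have h2 : 1 - Real.exp (Hfun κ c x)/x < 0 := by
        have := hsign1 x hx
        rw [sub_neg, lt_div_iff₀ hx0]; linarith
      exact mul_pos_of_neg_of_neg h1 h2
  · apply strictAntiOn_of_deriv_neg (convex_Ioo ρhat (c/s))
    · intro x hx
      have hx0 : (0:ℝ) < x := lt_trans hρhat0 hx.1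
      exact (hasDerivAt_gfun κ c x hx0).continuousAt.continuousWithinAt
    · intro x hx
      rw [interior_Ioo] at hx
      have hx0 : (0:ℝ) < x := lt_trans hρhat0 hx.1
      rw [(hasDerivAt_gfun κ c x hx0).deriv]
      have h1 : κ - c^2/x^2 < 0 := hfac1 x hx0 hx.2
      have h2 : 0 < 1 - Real.exp (Hfun κ c x)/x := by
        have := hsign2 x hx
        rw [sub_pos, div_lt_one hx0]; linarith
      exact mul_neg_of_neg_of_pos h1 h2
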